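/- arXiv:2306.02079 — 5 statements merged into one kernel-verified Lean document; each statement's English description precedes it below -/
import Mathlib

section
/- Let G be a graph obtained from the complete graph K_n on vertices v_1,...,v_n with n ≥ 4 by adding two new vertices v_{n+1} and v_{n+2}, where v_{n+1} is adjacent exactly to v_n and v_{n-1}, and v_{n+2} is adjacent exactly to v_n. Then G has no ic-partition. -/
namespace ICNL

variable {V : Type*}

/-- `S` is a dominating set of `G`. -/
def Dominating (G : SimpleGraph V) (S : Set V) : Prop :=
  ∀ v : V, v ∈ S ∨ ∃ u ∈ S, G.Adj u v

/-- `S` is an independent set of `G`. -/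
def IndepSet (G : SimpleGraph V) (S : Set V) : Prop :=
  ∀ ⦃u : V⦄, u ∈ S → ∀ ⦃v : V⦄, v ∈ S → ¬ G.Adj u v

/-- `S` is an independent dominating set of `G`. -/
def IndepDom (G : SimpleGraph V) (S : Set V) : Prop :=
  IndepSet G S ∧ Dominating G S

/-- `A` and `B` form an independent coalition in `G`. -/
def ICCoalition (G : SimpleGraph V) (A B : Set V) : Prop :=
  Disjoint A B ∧ IndepSet G A ∧ IndepSet G B ∧
    ¬ IndepDom G A ∧ ¬ IndepDom G B ∧ IndepDom G (A ∪ B)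

/-- `π` is a partition of the vertex set into nonempty classes. -/
def IsPartition (π : Finset (Finset V)) : Prop :=
  (∀ A ∈ π, A.Nonempty) ∧ ∀ v : V, ∃! A : Finset V, A ∈ π ∧ v ∈ A

/-- `π` is an independent coalition partition of `G`. -/
def IsICPartition (G : SimpleGraph V) (π : Finset (Finset V)) : Prop :=
  IsPartition π ∧
    ∀ A ∈ π, (∃ v : V, (A : Set V) = {v} ∧ Dominating G (A : Set V)) ∨
      (¬ IndepDom G (A : Set V) ∧
        ∃ B ∈ π, B ≠ A ∧ ICCoalition G (A : Set V) (B : Set V))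

/-- The independent coalition number: the maximum number of classes of an
ic-partition of `G`. -/
noncomputable def IC (G : SimpleGraph V) : ℕ :=
  sSup {k | ∃ π : Finset (Finset V), IsICPartition G π ∧ π.card = k}


/-- The graph obtained from the complete graph on the `n` vertices `0, …, n-1`
(representing `v_1, …, v_n`) together with two new vertices `n` (representing
`v_{n+1}`) and `n+1` (representing `v_{n+2}`), where vertex `n` is adjacent
exactly to the vertices `n-1` (i.e. `v_n`) and `n-2` (i.e. `v_{n-1}`), and
vertex `n+1` is adjacent exactly to the vertex `n-1` (i.e. `v_n`). -/
def BGraph (n : ℕ) : SimpleGraph (Fin (n + 2)) :=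
  SimpleGraph.fromRel (fun u v =>
    ((u : ℕ) < n ∧ (v : ℕ) < n) ∨
    ((u : ℕ) = n ∧ ((v : ℕ) = n - 1 ∨ (v : ℕ) = n - 2)) ∨
    ((u : ℕ) = n + 1 ∧ (v : ℕ) = n - 1))

def vN1 (n : ℕ) : Fin (n + 2) := ⟨n - 1, by omega⟩
def vN2 (n : ℕ) : Fin (n + 2) := ⟨n - 2, by omega⟩
def vN (n : ℕ) : Fin (n + 2) := ⟨n, by omega⟩
def vP (n : ℕ) : Fin (n + 2) := ⟨n + 1, by omega⟩

@[simp] lemma vN1_val (n : ℕ) : ((vN1 n : Fin (n + 2)) : ℕ) = n - 1 := rfl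
@[simp] lemma vN2_val (n : ℕ) : ((vN2 n : Fin (n + 2)) : ℕ) = n - 2 := rfl
@[simp] lemma vN_val (n : ℕ) : ((vN n : Fin (n + 2)) : ℕ) = n := rfl
@[simp] lemma vP_val (n : ℕ) : ((vP n : Fin (n + 2)) : ℕ) = n + 1 := rfl

lemma adj_val {n : ℕ} (u v : Fin (n + 2)) :
    (BGraph n).Adj u v ↔ (u : ℕ) ≠ (v : ℕ) ∧
      ((((u : ℕ) < n ∧ (v : ℕ) < n) ∨ ((u : ℕ) = n ∧ ((v : ℕ) = n - 1 ∨ (v : ℕ) = n - 2)) ∨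
          ((u : ℕ) = n + 1 ∧ (v : ℕ) = n - 1)) ∨
        (((v : ℕ) < n ∧ (u : ℕ) < n) ∨ ((v : ℕ) = n ∧ ((u : ℕ) = n - 1 ∨ (u : ℕ) = n - 2)) ∨
          ((v : ℕ) = n + 1 ∧ (u : ℕ) = n - 1))) := by
  simp only [BGraph, SimpleGraph.fromRel_adj, ne_eq, Fin.ext_iff]

/-- Only `v_{n}` (index `n-1`) dominates alone. -/
lemma dom_single {n : ℕ} (hn : 4 ≤ n) {v : Fin (n + 2)} (h : Dominating (BGraph n) {v}) :
    (v : ℕ) = n - 1 := by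
  by_contra hv
  rcases h (vP n) with h1 | ⟨u, hu, hadj⟩
  · have h1' : (v : ℕ) = n + 1 := by
      have := congrArg Fin.val (Set.mem_singleton_iff.mp h1)
      simpa using this.symm
    rcases h (0 : Fin (n + 2)) with h2 | ⟨u, hu, hadj⟩
    · have := congrArg Fin.val (Set.mem_singleton_iff.mp h2)
      simp only [Fin.val_zero] at this
      omega
    · have hu' : u = v := Set.mem_singleton_iff.mp hu
      rw [hu', adj_val] at hadj
      simp only [Fin.val_zero] at hadj
      omega
  · have hu' : u = v := Set.mem_singleton_iff.mp hu
    rw [hu', adj_val] at hadj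
    simp only [vP_val] at hadj
    have := v.isLt
    omega

/-- Classification of independent dominating sets of `BGraph n`. -/
lemma classify {n : ℕ} (hn : 4 ≤ n) {S : Set (Fin (n + 2))} (hS : IndepDom (BGraph n) S) :
    S = {vN1 n} ∨ S = {vN2 n, vP n} ∨
      ∃ s : Fin (n + 2), (s : ℕ) + 3 ≤ n ∧ S = {s, vN n, vP n} := by
  obtain ⟨hInd, hDom⟩ := hS
  by_cases h1 : vN1 n ∈ S
  · left
    ext u
    simp only [Set.mem_singleton_iff]
    refine ⟨fun hu => ?_, fun h => h ▸ h1⟩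
    by_contra hne
    have hval : (u : ℕ) ≠ n - 1 := by
      intro h
      exact hne (Fin.ext (by simpa using h))
    have hu2 := u.isLt
    exact hInd h1 hu (by rw [adj_val, vN1_val]; omega)
  · have hP : vP n ∈ S := by
      rcases hDom (vP n) with h | ⟨u, hu, hadj⟩
      · exact h
      · exfalso
        rw [adj_val] at hadj
        simp only [vP_val] at hadj
        have hu2 := u.isLt
        have huv : (u : ℕ) = n - 1 := by omega
        have : u = vN1 n := Fin.ext (by simpa using huv)
        exact h1 (this ▸ hu)
    obtain ⟨s, hsS, hslt⟩ : ∃ s ∈ S, (s : ℕ) < n := by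
      rcases hDom (0 : Fin (n + 2)) with h | ⟨u, hu, hadj⟩
      · exact ⟨_, h, by simp; omega⟩
      · refine ⟨u, hu, ?_⟩
        rw [adj_val] at hadj
        simp only [Fin.val_zero] at hadj
        have hu2 := u.isLt
        omega
    have hs1 : (s : ℕ) ≠ n - 1 := by
      intro h
      have : s = vN1 n := Fin.ext (by simpa using h)
      exact h1 (this ▸ hsS)
    have huniqK : ∀ t ∈ S, (t : ℕ) < n → t = s := by
      intro t ht htn
      by_contra hne
      have hvne : (t : ℕ) ≠ (s : ℕ) := fun h => hne (Fin.ext h)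
      exact hInd ht hsS (by rw [adj_val]; omega)
    by_cases hs2 : (s : ℕ) = n - 2
    · right; left
      ext u
      simp only [Set.mem_insert_iff, Set.mem_singleton_iff]
      constructor
      · intro hu
        have hu2 := u.isLt
        rcases lt_or_ge (u : ℕ) n with h | h
        · left; rw [huniqK u hu h]; exact Fin.ext (by simpa using hs2)
        · have : (u : ℕ) = n ∨ (u : ℕ) = n + 1 := by omega
          rcases this with h' | h'
          · exact absurd (hInd hu hsS) (by simp; rw [adj_val]; omega)
          · right; exact Fin.ext (by simpa using h')
      · rintro (rfl | rfl)
        · have : vN2 n = s := Fin.ext (by simpa using hs2.symm)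
          exact this ▸ hsS
        · exact hP
    · right; right
      have hs3 : (s : ℕ) + 3 ≤ n := by omega
      have hNS : vN n ∈ S := by
        rcases hDom (vN n) with h | ⟨u, hu, hadj⟩
        · exact h
        · exfalso
          rw [adj_val] at hadj
          simp only [vN_val] at hadj
          have hu2 := u.isLt
          have : (u : ℕ) = n - 1 ∨ (u : ℕ) = n - 2 := by omega
          rcases this with h' | h'
          · have : u = vN1 n := Fin.ext (by simpa using h')
            exact h1 (this ▸ hu)
          · have := huniqK u hu (by omega)
            rw [this] at h'
            exact hs2 h'
      refine ⟨s, hs3, ?_⟩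
      ext u
      simp only [Set.mem_insert_iff, Set.mem_singleton_iff]
      constructor
      · intro hu
        have hu2 := u.isLt
        rcases lt_or_ge (u : ℕ) n with h | h
        · exact Or.inl (huniqK u hu h)
        · have : (u : ℕ) = n ∨ (u : ℕ) = n + 1 := by omega
          rcases this with h' | h'
          · exact Or.inr (Or.inl (Fin.ext (by simpa using h')))
          · exact Or.inr (Or.inr (Fin.ext (by simpa using h')))
      · rintro (rfl | rfl | rfl)
        · exact hsS
        · exact hNS
        · exact hP

theorem stmt_0 (n : ℕ) (hn : 4 ≤ n) :
    ¬ ∃ π : Finset (Finset (Fin (n + 2))), IsICPartition (BGraph n) π := by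
  rintro ⟨π, ⟨hnonempty, huniq⟩, hcl⟩
  have getcl : ∀ v : Fin (n + 2),
      ∃ A, A ∈ π ∧ v ∈ A ∧ ∀ B, B ∈ π → v ∈ B → B = A := by
    intro v
    obtain ⟨A, ⟨h1, h2⟩, hu⟩ := huniq v
    exact ⟨A, h1, h2, fun B hB hvB => hu B ⟨hB, hvB⟩⟩
  -- Step 1: the class of `vN2 n` is `{vN2 n}` and the class of `vP n` is `{vP n}`.
  obtain ⟨F, hFπ, hF2, hFu⟩ := getcl (vN2 n)
  obtain ⟨G, hGπ, hPG, hGset⟩ : ∃ G, G ∈ π ∧ vP n ∈ G ∧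
      (G : Set (Fin (n + 2))) = {vP n} := by
    rcases hcl F hFπ with ⟨v, hv, hvdom⟩ | ⟨hFnot, G, hGπ, hGne, hdis, _, _, _, _, hU⟩
    · exfalso
      have h2v : vN2 n = v := by
        rw [← Set.mem_singleton_iff, ← hv]; exact Finset.mem_coe.mpr hF2
      rw [hv] at hvdom
      have := dom_single hn hvdom
      have := congrArg Fin.val h2v
      simp only [vN2_val] at this
      omega
    · rcases classify hn hU with h | h | ⟨s, hs, h⟩
      · exfalso
        have : vN2 n ∈ (↑F ∪ ↑G : Set (Fin (n + 2))) := Or.inl (Finset.mem_coe.mpr hF2)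
        rw [h] at this
        have := congrArg Fin.val (Set.mem_singleton_iff.mp this)
        simp only [vN2_val, vN1_val] at this
        omega
      · have hPF : vP n ∉ (F : Set (Fin (n + 2))) := by
          intro hPF
          obtain ⟨x, hx⟩ := hnonempty G hGπ
          have hxU : x ∈ (↑F ∪ ↑G : Set (Fin (n + 2))) := Or.inr (Finset.mem_coe.mpr hx)
          rw [h] at hxU
          have hxF : x ∉ (F : Set (Fin (n + 2))) :=
            Set.disjoint_right.mp hdis (Finset.mem_coe.mpr hx)
          rcases hxU with rfl | h'
          · exact hxF (Finset.mem_coe.mpr hF2)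
          · rw [Set.mem_singleton_iff] at h'
            exact hxF (h' ▸ hPF)
        have hPGm : vP n ∈ (G : Set (Fin (n + 2))) := by
          have hPU : vP n ∈ (↑F ∪ ↑G : Set (Fin (n + 2))) := by
            rw [h]; right; rfl
          rcases hPU with h' | h'
          · exact absurd h' hPF
          · exact h'
        refine ⟨G, hGπ, Finset.mem_coe.mp hPGm, ?_⟩
        ext u
        simp only [Set.mem_singleton_iff]
        constructor
        · intro hu
          have : u ∈ (↑F ∪ ↑G : Set (Fin (n + 2))) := Or.inr hu
          rw [h] at this
          rcases this with rfl | h'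
          · exact absurd hu (Set.disjoint_left.mp hdis (Finset.mem_coe.mpr hF2))
          · exact Set.mem_singleton_iff.mp h'
        · rintro rfl; exact hPGm
      · exfalso
        have : vN2 n ∈ (↑F ∪ ↑G : Set (Fin (n + 2))) := Or.inl (Finset.mem_coe.mpr hF2)
        rw [h] at this
        simp only [Set.mem_insert_iff, Set.mem_singleton_iff, Fin.ext_iff, vN2_val, vN_val,
          vP_val] at this
        omega
  have hPu : ∀ B, B ∈ π → vP n ∈ B → B = G := by
    intro B h1 h2
    obtain ⟨A, hAπ, hAm, hAu⟩ := getcl (vP n)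
    exact (hAu B h1 h2).trans (hAu G hGπ hPG).symm
  -- Step 2: the class of `vN n` is `{s, vN n}` for some `s` with `s + 3 ≤ n`.
  obtain ⟨D, hDπ, hDN, hDu⟩ := getcl (vN n)
  obtain ⟨s, hs3, hsD, hDset⟩ : ∃ s : Fin (n + 2), (s : ℕ) + 3 ≤ n ∧
      s ∈ (D : Set (Fin (n + 2))) ∧ (D : Set (Fin (n + 2))) = {s, vN n} := by
    rcases hcl D hDπ with ⟨v, hv, hvdom⟩ | ⟨hDnot, E, hEπ, hEne, hdis, _, _, _, _, hU⟩
    · exfalso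
      have h2v : vN n = v := by
        rw [← Set.mem_singleton_iff, ← hv]; exact Finset.mem_coe.mpr hDN
      rw [hv] at hvdom
      have := dom_single hn hvdom
      have := congrArg Fin.val h2v
      simp only [vN_val] at this
      omega
    · have hNU : vN n ∈ (↑D ∪ ↑E : Set (Fin (n + 2))) := Or.inl (Finset.mem_coe.mpr hDN)
      rcases classify hn hU with h | h | ⟨s, hs, h⟩
      · exfalso
        rw [h] at hNU
        have := congrArg Fin.val (Set.mem_singleton_iff.mp hNU)
        simp only [vN_val, vN1_val] at this
        omega
      · exfalso
        rw [h] at hNU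
        simp only [Set.mem_insert_iff, Set.mem_singleton_iff, Fin.ext_iff, vN_val, vN2_val,
          vP_val] at hNU
        omega
      · have hPD : vP n ∉ (D : Set (Fin (n + 2))) := by
          intro hPD
          have hDG : D = G := hPu D hDπ (Finset.mem_coe.mp hPD)
          have : vN n ∈ (G : Set (Fin (n + 2))) := by
            rw [← hDG]; exact Finset.mem_coe.mpr hDN
          rw [hGset] at this
          have := congrArg Fin.val (Set.mem_singleton_iff.mp this)
          simp only [vN_val, vP_val] at this
          omega
        have hPE : vP n ∈ (E : Set (Fin (n + 2))) := by
          have hPU : vP n ∈ (↑D ∪ ↑E : Set (Fin (n + 2))) := by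
            rw [h]; right; right; rfl
          rcases hPU with h' | h'
          · exact absurd h' hPD
          · exact h'
        have hEG : E = G := hPu E hEπ (Finset.mem_coe.mp hPE)
        have hsD : s ∈ (D : Set (Fin (n + 2))) := by
          have hsU : s ∈ (↑D ∪ ↑E : Set (Fin (n + 2))) := by
            rw [h]; left; rfl
          rcases hsU with h' | h'
          · exact h'
          · exfalso
            rw [hEG, hGset, Set.mem_singleton_iff] at h'
            have := congrArg Fin.val h'
            simp only [vP_val] at this
            omega
        refine ⟨s, hs, hsD, ?_⟩
        ext u
        simp only [Set.mem_insert_iff, Set.mem_singleton_iff]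
        constructor
        · intro hu
          have : u ∈ (↑D ∪ ↑E : Set (Fin (n + 2))) := Or.inl hu
          rw [h] at this
          rcases this with h' | h' | h'
          · exact Or.inl h'
          · exact Or.inr h'
          · exfalso
            rw [Set.mem_singleton_iff] at h'
            exact hPD (h' ▸ hu)
        · rintro (rfl | rfl)
          · exact hsD
          · exact Finset.mem_coe.mpr hDN
  -- Step 3: pick `w ≤ n - 3` different from `s` and derive a contradiction.
  obtain ⟨w, hw3, hws⟩ : ∃ w : Fin (n + 2), (w : ℕ) + 3 ≤ n ∧ (w : ℕ) ≠ (s : ℕ) := by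
    rcases Nat.eq_zero_or_pos (s : ℕ) with h | h
    · refine ⟨(1 : Fin (n + 2)), ?_, ?_⟩ <;> rw [Fin.val_one] <;> omega
    · refine ⟨(0 : Fin (n + 2)), ?_, ?_⟩ <;> rw [Fin.val_zero] <;> omega
  obtain ⟨H, hHπ, hHw, hHu⟩ := getcl w
  rcases hcl H hHπ with ⟨v, hv, hvdom⟩ | ⟨hHnot, K, hKπ, hKne, hdis, _, _, _, _, hU⟩
  · have h2v : w = v := by
      rw [← Set.mem_singleton_iff, ← hv]; exact Finset.mem_coe.mpr hHw
    rw [hv] at hvdom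
    have := dom_single hn hvdom
    have := congrArg Fin.val h2v
    omega
  · have hwU : w ∈ (↑H ∪ ↑K : Set (Fin (n + 2))) := Or.inl (Finset.mem_coe.mpr hHw)
    rcases classify hn hU with h | h | ⟨t, ht, h⟩
    · rw [h] at hwU
      have := congrArg Fin.val (Set.mem_singleton_iff.mp hwU)
      simp only [vN1_val] at this
      omega
    · rw [h] at hwU
      simp only [Set.mem_insert_iff, Set.mem_singleton_iff, Fin.ext_iff, vN2_val,
        vP_val] at hwU
      omega
    · -- `w = t`
      have htw : t = w := by
        rw [h] at hwU
        simp only [Set.mem_insert_iff, Set.mem_singleton_iff, Fin.ext_iff, vN_val,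
          vP_val] at hwU
        rcases hwU with h' | h' | h'
        · exact Fin.ext h'.symm
        · omega
        · omega
      rw [htw] at h
      -- the class containing `vN n` is `D`, so `s ∈ H ∪ K`
      have hNU : vN n ∈ (↑H ∪ ↑K : Set (Fin (n + 2))) := by
        rw [h]; right; left; rfl
      have hsU : s ∈ (↑H ∪ ↑K : Set (Fin (n + 2))) := by
        rcases hNU with h' | h'
        · have : H = D := hDu H hHπ (Finset.mem_coe.mp h')
          left; rw [this]; exact hsD
        · have : K = D := hDu K hKπ (Finset.mem_coe.mp h')
          right; rw [this]; exact hsD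
      rw [h] at hsU
      simp only [Set.mem_insert_iff, Set.mem_singleton_iff, Fin.ext_iff, vN_val,
        vP_val] at hsU
      omega

end ICNL
end

section
/- Let G be a connected graph and let r ≥ 0 be the number of full vertices of G (vertices adjacent to all other vertices). If G admits an idomatic partition, then IC(G) ≥ 2·id(G) − r. -/
namespace ICNL

variable {V : Type*}

/-- `π` is an idomatic partition of `G`: a partition of the vertex set into
independent dominating sets. -/
def IsIdomaticPartition (G : SimpleGraph V) (π : Finset (Finset V)) : Prop :=
  IsPartition π ∧ ∀ A ∈ π, IndepDom G (A : Set V)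

/-- The idomatic number: the maximum number of classes of an idomatic partition of `G`. -/
noncomputable def idNum (G : SimpleGraph V) : ℕ :=
  sSup {k | ∃ π : Finset (Finset V), IsIdomaticPartition G π ∧ π.card = k}

/-! Take an idomatic partition with `id(G)` classes. A class `A` with at least two vertices splits
into `{a}` and `A \ {a}`: a proper subset of an independent dominating set is not dominating
(it is independent and strictly inside a maximal independent set), so these two sets form an
independent coalition. A one-vertex class is a dominating singleton and is kept. The resulting
ic-partition has `2·id(G) - s` classes, where `s` is the number of one-vertex classes, and each
of these consists of a full vertex, so `s ≤ r`. -/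

variable {G : SimpleGraph V}

lemma IndepSet.mono {A B : Set V} (hA : IndepSet G A) (hBA : B ⊆ A) : IndepSet G B :=
  fun _ hu _ hv => hA (hBA hu) (hBA hv)

lemma dominating_singleton_iff {v : V} : Dominating G {v} ↔ ∀ w, w ≠ v → G.Adj v w := by
  simp only [Dominating, Set.mem_singleton_iff, exists_eq_left]
  exact forall_congr' fun w => or_iff_not_imp_left

lemma IndepDom.not_indepDom_of_ssubset {A B : Set V} (hA : IndepDom G A) (hBA : B ⊂ A) :
    ¬ IndepDom G B := by
  rintro ⟨-, hB⟩
  obtain ⟨x, hxA, hxB⟩ := Set.exists_of_ssubset hBA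
  obtain hx | ⟨u, huB, hux⟩ := hB x
  · exact hxB hx
  · exact hA.1 (hBA.subset huB) hxA hux

lemma IndepDom.icCoalition {A B : Set V} (h : IndepDom G (A ∪ B)) (hAB : Disjoint A B)
    (hA : A.Nonempty) (hB : B.Nonempty) : ICCoalition G A B :=
  ⟨hAB, h.1.mono Set.subset_union_left, h.1.mono Set.subset_union_right,
    h.not_indepDom_of_ssubset <| Set.ssubset_union_left_iff.mpr fun hBA =>
      hB.ne_empty (hAB.symm.eq_bot_of_le hBA),
    h.not_indepDom_of_ssubset <| Set.ssubset_union_right_iff.mpr fun hAB' =>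
      hA.ne_empty (hAB.eq_bot_of_le hAB'),
    h⟩

lemma ICCoalition.symm {A B : Set V} (h : ICCoalition G A B) : ICCoalition G B A :=
  ⟨h.1.symm, h.2.2.1, h.2.1, h.2.2.2.2.1, h.2.2.2.1, Set.union_comm A B ▸ h.2.2.2.2.2⟩

section Partition

variable {π : Finset (Finset V)}

lemma IsPartition.eq_of_mem (hπ : IsPartition π) {A B : Finset V} (hA : A ∈ π) (hB : B ∈ π)
    {v : V} (hvA : v ∈ A) (hvB : v ∈ B) : A = B :=
  (hπ.2 v).unique ⟨hA, hvA⟩ ⟨hB, hvB⟩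

variable [DecidableEq V] {σ : Finset V → Finset (Finset V)}

lemma IsPartition.biUnion (hπ : IsPartition π)
    (hσ : ∀ A ∈ π, ∀ C ∈ σ A, C.Nonempty ∧ C ⊆ A)
    (hcover : ∀ A ∈ π, ∀ v ∈ A, ∃! C, C ∈ σ A ∧ v ∈ C) :
    IsPartition (π.biUnion σ) := by
  refine ⟨fun C hC => ?_, fun v => ?_⟩
  · obtain ⟨A, hA, hCA⟩ := Finset.mem_biUnion.mp hC
    exact (hσ A hA C hCA).1
  · obtain ⟨A, ⟨hA, hvA⟩, -⟩ := hπ.2 v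
    obtain ⟨C, ⟨hCA, hvC⟩, hCuniq⟩ := hcover A hA v hvA
    refine ⟨C, ⟨Finset.mem_biUnion.mpr ⟨A, hA, hCA⟩, hvC⟩, ?_⟩
    rintro D ⟨hD, hvD⟩
    obtain ⟨B, hB, hDB⟩ := Finset.mem_biUnion.mp hD
    obtain rfl := hπ.eq_of_mem hB hA ((hσ B hB D hDB).2 hvD) hvA
    exact hCuniq D ⟨hDB, hvD⟩

lemma IsPartition.card_biUnion (hπ : IsPartition π)
    (hσ : ∀ A ∈ π, ∀ C ∈ σ A, C.Nonempty ∧ C ⊆ A) :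
    (π.biUnion σ).card = ∑ A ∈ π, (σ A).card := by
  refine Finset.card_biUnion fun A hA B hB hAB => Finset.disjoint_left.mpr fun C hCA hCB => ?_
  obtain ⟨⟨v, hvC⟩, hCsubA⟩ := hσ A hA C hCA
  exact hAB (hπ.eq_of_mem hA hB (hCsubA hvC) ((hσ B hB C hCB).2 hvC))

end Partition

section SplitOff

variable [DecidableEq V] {A C : Finset V}

noncomputable def splitOff (A : Finset V) : Finset (Finset V) :=
  if h : A.Nontrivial then {{h.nonempty.choose}, A.erase h.nonempty.choose} else {A}

lemma splitOff_of_nontrivial (h : A.Nontrivial) : ∃ a ∈ A, splitOff A = {{a}, A.erase a} :=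
  ⟨_, h.nonempty.choose_spec, dif_pos h⟩

lemma splitOff_of_not_nontrivial (h : ¬ A.Nontrivial) : splitOff A = {A} :=
  dif_neg h

lemma nonempty_and_subset_of_mem_splitOff (hA : A.Nonempty) (hC : C ∈ splitOff A) :
    C.Nonempty ∧ C ⊆ A := by
  by_cases h : A.Nontrivial
  · obtain ⟨a, ha, hsplit⟩ := splitOff_of_nontrivial h
    rw [hsplit, Finset.mem_insert, Finset.mem_singleton] at hC
    obtain rfl | rfl := hC
    · exact ⟨Finset.singleton_nonempty a, Finset.singleton_subset_iff.mpr ha⟩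
    · exact ⟨h.erase_nonempty, Finset.erase_subset a A⟩
  · rw [splitOff_of_not_nontrivial h, Finset.mem_singleton] at hC
    subst hC
    exact ⟨hA, subset_rfl⟩

lemma existsUnique_mem_splitOff {v : V} (hv : v ∈ A) : ∃! C, C ∈ splitOff A ∧ v ∈ C := by
  by_cases h : A.Nontrivial
  · obtain ⟨a, -, hsplit⟩ := splitOff_of_nontrivial h
    simp only [hsplit, Finset.mem_insert, Finset.mem_singleton]
    by_cases hva : v = a
    · exact ⟨{a}, by simp [hva], by rintro C ⟨rfl | rfl, hvC⟩ <;> simp_all⟩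
    · exact ⟨A.erase a, by simp [hva, hv], by rintro C ⟨rfl | rfl, hvC⟩ <;> simp_all⟩
  · simp only [splitOff_of_not_nontrivial h, Finset.mem_singleton]
    exact ⟨A, ⟨rfl, hv⟩, fun C hC => hC.1⟩

lemma card_splitOff (hA : A.Nonempty) : (splitOff A).card = if A.card = 1 then 1 else 2 := by
  obtain ⟨a, rfl⟩ | h := hA.exists_eq_singleton_or_nontrivial
  · simp [splitOff_of_not_nontrivial (Finset.not_nontrivial_singleton)]
  · obtain ⟨a, -, hsplit⟩ := splitOff_of_nontrivial h
    rw [if_neg (Finset.one_lt_card_iff_nontrivial.mpr h).ne', hsplit]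
    exact Finset.card_pair fun hEq => Finset.notMem_erase a A (hEq ▸ Finset.mem_singleton_self a)

end SplitOff

section Idomatic

variable [DecidableEq V] {π : Finset (Finset V)}

lemma IsIdomaticPartition.isICPartition_biUnion_splitOff (hπ : IsIdomaticPartition G π) :
    IsICPartition G (π.biUnion splitOff) := by
  have hσ : ∀ A ∈ π, ∀ C ∈ splitOff A, C.Nonempty ∧ C ⊆ A := fun A hA _ =>
    nonempty_and_subset_of_mem_splitOff (hπ.1.1 A hA)
  refine ⟨hπ.1.biUnion hσ fun _ _ _ => existsUnique_mem_splitOff, fun C hC => ?_⟩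
  obtain ⟨A, hA, hCA⟩ := Finset.mem_biUnion.mp hC
  by_cases h : A.Nontrivial
  · right
    obtain ⟨a, ha, hsplit⟩ := splitOff_of_nontrivial h
    have hunion : (({a} : Finset V) : Set V) ∪ (A.erase a : Finset V) = A := by
      rw [← Finset.coe_union, ← Finset.insert_eq, Finset.insert_erase ha]
    have hcoal : ICCoalition G ({a} : Finset V) (A.erase a : Finset V) :=
      (hunion ▸ hπ.2 A hA).icCoalition
        (Finset.disjoint_coe.mpr (Finset.disjoint_singleton_left.mpr (Finset.notMem_erase a A)))
        (Finset.coe_nonempty.mpr (Finset.singleton_nonempty a))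
        (Finset.coe_nonempty.mpr h.erase_nonempty)
    have hne : ({a} : Finset V) ≠ A.erase a := fun hEq =>
      Finset.notMem_erase a A (hEq ▸ Finset.mem_singleton_self a)
    have hmem : ∀ D ∈ splitOff A, D ∈ π.biUnion splitOff := fun D hD =>
      Finset.mem_biUnion.mpr ⟨A, hA, hD⟩
    rw [hsplit, Finset.mem_insert, Finset.mem_singleton] at hCA
    obtain rfl | rfl := hCA
    · exact ⟨hcoal.2.2.2.1, A.erase a, hmem _ (by simp [hsplit]), hne.symm, hcoal⟩
    · exact ⟨hcoal.2.2.2.2.1, {a}, hmem _ (by simp [hsplit]), hne, hcoal.symm⟩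
  · left
    rw [splitOff_of_not_nontrivial h, Finset.mem_singleton] at hCA
    subst hCA
    obtain ⟨v, rfl⟩ := ((hπ.1.1 C hA).exists_eq_singleton_or_nontrivial).resolve_right h
    exact ⟨v, Finset.coe_singleton v, (hπ.2 _ hA).2⟩

lemma IsPartition.card_biUnion_splitOff_add (hπ : IsPartition π) :
    (π.biUnion splitOff).card + (π.filter (·.card = 1)).card = 2 * π.card := by
  rw [hπ.card_biUnion fun A hA _ => nonempty_and_subset_of_mem_splitOff (hπ.1 A hA),
    Finset.card_filter, ← Finset.sum_add_distrib, mul_comm, ← smul_eq_mul, ← Finset.sum_const]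
  refine Finset.sum_congr rfl fun A hA => ?_
  rw [card_splitOff (hπ.1 A hA)]
  split_ifs <;> rfl

end Idomatic

lemma IsIdomaticPartition.card_filter_card_eq_one_le_ncard [Finite V] {π : Finset (Finset V)}
    (hπ : IsIdomaticPartition G π) :
    (π.filter (·.card = 1)).card ≤ {v : V | ∀ w, w ≠ v → G.Adj v w}.ncard := by
  have hsub : (π.filter (·.card = 1) : Set (Finset V)) ⊆
      (fun v => {v}) '' {v : V | ∀ w, w ≠ v → G.Adj v w} := by
    intro A hA
    obtain ⟨hAπ, hA1⟩ := Finset.mem_filter.mp hA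
    obtain ⟨v, rfl⟩ := Finset.card_eq_one.mp hA1
    have hdom := (hπ.2 _ hAπ).2
    rw [Finset.coe_singleton, dominating_singleton_iff] at hdom
    exact ⟨v, hdom, rfl⟩
  rw [← Set.ncard_coe_finset]
  exact (Set.ncard_le_ncard hsub (Set.toFinite _)).trans (Set.ncard_image_le (Set.toFinite _))

lemma bddAbove_setOf_card [Finite V] (p : Finset (Finset V) → Prop) :
    BddAbove {k | ∃ π : Finset (Finset V), p π ∧ π.card = k} := by
  have := Fintype.ofFinite V
  exact ⟨Fintype.card (Finset V), by rintro _ ⟨π, -, rfl⟩; exact Finset.card_le_univ π⟩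

lemma exists_isIdomaticPartition_card_eq_idNum [Finite V]
    (h : ∃ π : Finset (Finset V), IsIdomaticPartition G π) :
    ∃ π : Finset (Finset V), IsIdomaticPartition G π ∧ π.card = idNum G := by
  obtain ⟨π, hπ⟩ := h
  exact Nat.sSup_mem (by exact ⟨π.card, π, hπ, rfl⟩) (bddAbove_setOf_card _)

lemma IsICPartition.card_le_IC [Finite V] {π : Finset (Finset V)} (hπ : IsICPartition G π) :
    π.card ≤ IC G :=
  le_csSup (bddAbove_setOf_card _) ⟨π, hπ, rfl⟩

theorem stmt_4_general {V : Type*} [Fintype V] (G : SimpleGraph V)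
    (r : ℕ) (hr : r = {v : V | ∀ w : V, w ≠ v → G.Adj v w}.ncard)
    (h : ∃ π : Finset (Finset V), IsIdomaticPartition G π) :
    2 * idNum G - r ≤ IC G := by
  classical
  obtain ⟨π, hπ, hcard⟩ := exists_isIdomaticPartition_card_eq_idNum h
  have hIC := hπ.isICPartition_biUnion_splitOff.card_le_IC
  have hcount := hπ.1.card_biUnion_splitOff_add
  have hfull := hπ.card_filter_card_eq_one_le_ncard
  omega

theorem stmt_4 {V : Type*} [Fintype V] (G : SimpleGraph V) (hconn : G.Connected)
    (r : ℕ) (hr : r = {v : V | ∀ w : V, w ≠ v → G.Adj v w}.ncard)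
    (h : ∃ π : Finset (Finset V), IsIdomaticPartition G π) :
    2 * idNum G - r ≤ IC G :=
  stmt_4_general G r hr h

end ICNL
end

section
/- Let G be a graph of order n containing exactly r ≥ 1 full vertices, let F be the set of full vertices of G, and let k satisfy r < k ≤ n. Then IC(G) = k if and only if IC(G[V∖F]) = k − r, where G[V∖F] is the subgraph of G induced by the non-full vertices. -/
namespace ICNL

variable {V : Type*}

section Helpers

variable {G : SimpleGraph V} {F : Set V}

lemma indepDom_singleton {v : V} (hv : ∀ w, w ≠ v → G.Adj v w) :
    IndepDom G ({v} : Set V) := by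
  constructor
  · intro a ha b hb
    rw [Set.mem_singleton_iff] at ha hb
    subst ha; subst hb; simp
  · intro w
    by_cases h : w = v
    · exact Or.inl (by simp [h])
    · exact Or.inr ⟨v, Set.mem_singleton v, hv w h⟩

lemma full_of_dom_singleton {v : V} (hd : Dominating G ({v} : Set V)) :
    ∀ w, w ≠ v → G.Adj v w := by
  intro w hw
  rcases hd w with h | ⟨u, hu, h⟩
  · exact absurd (Set.mem_singleton_iff.1 h) hw
  · rwa [Set.mem_singleton_iff.1 hu] at h

/-- In an ic-partition, the class of a full vertex is the singleton of that vertex. -/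
lemma class_of_full {π : Finset (Finset V)} (hπ : IsICPartition G π)
    {v : V} (hv : ∀ w, w ≠ v → G.Adj v w) {A : Finset V} (hA : A ∈ π) (hvA : v ∈ A) :
    A = {v} := by
  rcases hπ.2 A hA with ⟨u, hu, _⟩ | ⟨hnd, B, hB, hBA, hco⟩
  · have hvu : v = u := by
      have : (v : V) ∈ (A : Set V) := hvA
      rw [hu] at this; exact this
    apply Finset.coe_injective
    rw [hu, Finset.coe_singleton, hvu]
  · exfalso
    apply hnd
    have hAv : (A : Set V) = {v} := by
      apply Set.eq_singleton_iff_unique_mem.2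
      refine ⟨hvA, fun w hw => ?_⟩
      by_contra hwv
      exact hco.2.1 (show (v:V) ∈ (A : Set V) from hvA) hw (hv w hwv)
    rw [hAv]
    exact indepDom_singleton hv

lemma indepSet_image {S : Set ↥(Fᶜ)} :
    IndepSet G (Subtype.val '' S) ↔ IndepSet (G.induce Fᶜ) S := by
  constructor
  · intro h a ha b hb hab
    exact h (Set.mem_image_of_mem _ ha) (Set.mem_image_of_mem _ hb) hab
  · rintro h u ⟨a, ha, rfl⟩ w ⟨b, hb, rfl⟩ hab
    exact h ha hb hab

lemma dominating_image (hfull : ∀ v ∈ F, ∀ w, w ≠ v → G.Adj v w)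
    (hne : (Fᶜ : Set V).Nonempty) {S : Set ↥(Fᶜ)} :
    Dominating G (Subtype.val '' S) ↔ Dominating (G.induce Fᶜ) S := by
  constructor
  · intro h x
    rcases h ↑x with hx | ⟨u, hu, hadj⟩
    · left
      obtain ⟨a, ha, hax⟩ := hx
      rwa [Subtype.val_injective hax] at ha
    · obtain ⟨a, ha, rfl⟩ := hu
      exact Or.inr ⟨a, ha, hadj⟩
  · intro h w
    have : Nonempty ↥(Fᶜ) := hne.to_subtype
    obtain ⟨x0⟩ := this
    have hSne : S.Nonempty := by
      rcases h x0 with h1 | ⟨a, ha, _⟩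
      · exact ⟨x0, h1⟩
      · exact ⟨a, ha⟩
    by_cases hw : w ∈ F
    · obtain ⟨a, ha⟩ := hSne
      have hav : (a : V) ≠ w := fun e => (a.2 : ↑a ∈ Fᶜ) (e ▸ hw)
      exact Or.inr ⟨↑a, Set.mem_image_of_mem _ ha,
        (hfull w hw ↑a hav).symm⟩
    · rcases h ⟨w, hw⟩ with hx | ⟨a, ha, hadj⟩
      · exact Or.inl ⟨⟨w, hw⟩, hx, rfl⟩
      · exact Or.inr ⟨↑a, Set.mem_image_of_mem _ ha, hadj⟩

lemma indepDom_image (hfull : ∀ v ∈ F, ∀ w, w ≠ v → G.Adj v w)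
    (hne : (Fᶜ : Set V).Nonempty) {S : Set ↥(Fᶜ)} :
    IndepDom G (Subtype.val '' S) ↔ IndepDom (G.induce Fᶜ) S :=
  and_congr indepSet_image (dominating_image hfull hne)

lemma iccoalition_image (hfull : ∀ v ∈ F, ∀ w, w ≠ v → G.Adj v w)
    (hne : (Fᶜ : Set V).Nonempty) {S T : Set ↥(Fᶜ)} :
    ICCoalition G (Subtype.val '' S) (Subtype.val '' T) ↔
      ICCoalition (G.induce Fᶜ) S T := by
  unfold ICCoalition
  rw [Set.disjoint_image_iff Subtype.val_injective, ← Set.image_union]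
  rw [indepSet_image, indepSet_image, indepDom_image hfull hne,
    indepDom_image hfull hne, indepDom_image hfull hne]

/-- The induced subgraph on the non-full vertices has no dominating singleton. -/
lemma not_dom_singleton (hF : F = {v : V | ∀ w : V, w ≠ v → G.Adj v w}) (x : ↥(Fᶜ)) :
    ¬ Dominating (G.induce Fᶜ) ({x} : Set ↥(Fᶜ)) := by
  intro h
  have hx : ¬ (∀ w : V, w ≠ (x : V) → G.Adj ↑x w) := fun hfl =>
    x.2 ((Set.ext_iff.1 hF ↑x).2 hfl)
  push_neg at hx
  obtain ⟨w, hwx, hnadj⟩ := hx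
  have hwF : w ∉ F := by
    intro hw
    rw [hF, Set.mem_setOf_eq] at hw
    exact hnadj ((hw ↑x fun e => hwx e.symm).symm)
  rcases h ⟨w, hwF⟩ with h1 | ⟨u, hu, hadj⟩
  · exact hwx (congrArg Subtype.val (Set.mem_singleton_iff.1 h1))
  · rw [Set.mem_singleton_iff] at hu
    subst hu
    exact hnadj hadj

lemma mem_F_of_dom (hF : F = {v : V | ∀ w : V, w ≠ v → G.Adj v w}) {v : V}
    (hd : Dominating G ({v} : Set V)) : v ∈ F := by
  rw [hF, Set.mem_setOf_eq]
  exact full_of_dom_singleton hd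

lemma coe_map_subtype (A : Finset ↥(Fᶜ)) :
    ((A.map (Function.Embedding.subtype _) : Finset V) : Set V)
      = Subtype.val '' (A : Set ↥(Fᶜ)) := by
  rw [Finset.coe_map]
  rfl


lemma dirA [Fintype V] (hF : F = {v : V | ∀ w : V, w ≠ v → G.Adj v w})
    (hne : (Fᶜ : Set V).Nonempty)
    {π' : Finset (Finset ↥(Fᶜ))} (h : IsICPartition (G.induce Fᶜ) π') :
    ∃ π : Finset (Finset V), IsICPartition G π ∧ π.card = π'.card + F.ncard := by
  classical
  have hfull : ∀ v ∈ F, ∀ w, w ≠ v → G.Adj v w := by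
    intro v hv; rw [hF, Set.mem_setOf_eq] at hv; exact hv
  set Fs : Finset (Finset V) :=
    ((Set.toFinite F).toFinset).image (fun v => ({v} : Finset V)) with hFsdef
  set π₀ : Finset (Finset V) :=
    π'.image (fun A => A.map (Function.Embedding.subtype _)) with hπ₀def
  have hmemFs : ∀ A ∈ Fs, ∃ v ∈ F, A = ({v} : Finset V) := by
    intro A hA
    rw [hFsdef, Finset.mem_image] at hA
    obtain ⟨v, hv, hv2⟩ := hA
    exact ⟨v, (Set.Finite.mem_toFinset _).1 hv, hv2.symm⟩
  have hFsmem : ∀ v ∈ F, ({v} : Finset V) ∈ Fs := fun v hv =>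
    Finset.mem_image.2 ⟨v, (Set.Finite.mem_toFinset _).2 hv, rfl⟩
  have hπ₀mem : ∀ A ∈ π₀, ∃ B ∈ π', B.map (Function.Embedding.subtype _) = A := by
    intro A hA
    rwa [hπ₀def, Finset.mem_image] at hA
  have hπ₀sub : ∀ A ∈ π₀, ∀ v ∈ A, v ∈ Fᶜ := by
    intro A hA v hv
    obtain ⟨B, hB, rfl⟩ := hπ₀mem A hA
    rw [Finset.mem_map] at hv
    obtain ⟨y, hy, rfl⟩ := hv
    exact y.2
  have hdisj : Disjoint Fs π₀ := by
    rw [Finset.disjoint_left]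
    intro A hA hA0
    obtain ⟨v, hv, rfl⟩ := hmemFs A hA
    exact (hπ₀sub _ hA0 v (Finset.mem_singleton_self v)) hv
  refine ⟨Fs ∪ π₀, ⟨⟨?_, ?_⟩, ?_⟩, ?_⟩
  · -- nonempty classes
    intro A hA
    rcases Finset.mem_union.1 hA with hA | hA
    · obtain ⟨v, _, rfl⟩ := hmemFs A hA
      exact ⟨v, Finset.mem_singleton_self v⟩
    · obtain ⟨B, hB, rfl⟩ := hπ₀mem A hA
      exact Finset.map_nonempty.2 (h.1.1 B hB)
  · -- unique class
    intro v
    by_cases hv : v ∈ F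
    · refine ⟨{v}, ⟨Finset.mem_union_left _ (hFsmem v hv), Finset.mem_singleton_self v⟩, ?_⟩
      rintro B ⟨hB, hvB⟩
      rcases Finset.mem_union.1 hB with hB | hB
      · obtain ⟨w, hw, rfl⟩ := hmemFs B hB
        rw [Finset.mem_singleton.1 hvB]
      · exact absurd hv (hπ₀sub B hB v hvB)
    · obtain ⟨A', ⟨hA', hxA'⟩, huniq⟩ := h.1.2 ⟨v, hv⟩
      refine ⟨A'.map (Function.Embedding.subtype _),
        ⟨Finset.mem_union_right _ (Finset.mem_image_of_mem _ hA'),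
          Finset.mem_map_of_mem _ hxA'⟩, ?_⟩
      rintro B ⟨hB, hvB⟩
      rcases Finset.mem_union.1 hB with hB | hB
      · obtain ⟨w, hw, rfl⟩ := hmemFs B hB
        exact absurd (Finset.mem_singleton.1 hvB ▸ hw) hv
      · obtain ⟨C, hC, rfl⟩ := hπ₀mem B hB
        obtain ⟨y, hy, hyv⟩ := Finset.mem_map.1 hvB
        have hyx : y = ⟨v, hv⟩ := Subtype.ext hyv
        have hCA : C = A' := huniq C ⟨hC, by rwa [hyx] at hy⟩
        rw [hCA]
  · -- clauses
    intro A hA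
    rcases Finset.mem_union.1 hA with hA | hA
    · obtain ⟨v, hv, rfl⟩ := hmemFs A hA
      left
      refine ⟨v, Finset.coe_singleton v, ?_⟩
      rw [Finset.coe_singleton]
      exact (indepDom_singleton (hfull v hv)).2
    · obtain ⟨B, hB, rfl⟩ := hπ₀mem A hA
      rcases h.2 B hB with ⟨x, hx1, hx2⟩ | ⟨hnd, C, hC, hCB, hco⟩
      · exact absurd (hx1 ▸ hx2) (not_dom_singleton hF x)
      · right
        constructor
        · rw [coe_map_subtype, indepDom_image hfull hne]
          exact hnd
        · refine ⟨C.map (Function.Embedding.subtype _),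
            Finset.mem_union_right _ (Finset.mem_image_of_mem _ hC), ?_, ?_⟩
          · intro e
            exact hCB (Finset.map_injective _ e)
          · rw [coe_map_subtype, coe_map_subtype, iccoalition_image hfull hne]
            exact hco
  · -- cardinality
    rw [Finset.card_union_of_disjoint hdisj]
    have h1 : Fs.card = F.ncard := by
      rw [hFsdef, Finset.card_image_of_injective _ Finset.singleton_injective,
        Set.ncard_eq_toFinset_card F (Set.toFinite F)]
    have h2 : π₀.card = π'.card := by
      rw [hπ₀def]
      exact Finset.card_image_of_injective _ (Finset.map_injective _)
    omega


lemma dirB [Fintype V] (hF : F = {v : V | ∀ w : V, w ≠ v → G.Adj v w})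
    (hne : (Fᶜ : Set V).Nonempty)
    {π : Finset (Finset V)} (h : IsICPartition G π) :
    ∃ π' : Finset (Finset ↥(Fᶜ)), IsICPartition (G.induce Fᶜ) π' ∧
      π.card = π'.card + F.ncard := by
  classical
  have hfull : ∀ v ∈ F, ∀ w, w ≠ v → G.Adj v w := by
    intro v hv; rw [hF, Set.mem_setOf_eq] at hv; exact hv
  set Fs : Finset (Finset V) :=
    ((Set.toFinite F).toFinset).image (fun v => ({v} : Finset V)) with hFsdef
  have hmemFs : ∀ A ∈ Fs, ∃ v ∈ F, A = ({v} : Finset V) := by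
    intro A hA
    rw [hFsdef, Finset.mem_image] at hA
    obtain ⟨v, hv, hv2⟩ := hA
    exact ⟨v, (Set.Finite.mem_toFinset _).1 hv, hv2.symm⟩
  have hFsmem : ∀ v ∈ F, ({v} : Finset V) ∈ Fs := fun v hv =>
    Finset.mem_image.2 ⟨v, (Set.Finite.mem_toFinset _).2 hv, rfl⟩
  set π₀ : Finset (Finset V) := π \ Fs with hπ₀def
  have hFsπ : Fs ⊆ π := by
    intro A hA
    obtain ⟨v, hv, rfl⟩ := hmemFs A hA
    obtain ⟨B, ⟨hB, hvB⟩, _⟩ := h.1.2 v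
    have hBv := class_of_full h (hfull v hv) hB hvB
    rwa [hBv] at hB
  have hπ₀sub : ∀ A ∈ π₀, ∀ v ∈ A, v ∈ Fᶜ := by
    intro A hA v hv
    by_contra hvF
    rw [Set.notMem_compl_iff] at hvF
    have hAv := class_of_full h (hfull v hvF) (Finset.mem_sdiff.1 hA).1 hv
    exact (Finset.mem_sdiff.1 hA).2 (hAv ▸ hFsmem v hvF)
  have hrec : ∀ A ∈ π₀,
      (A.subtype (fun v => v ∈ Fᶜ)).map (Function.Embedding.subtype _) = A := by
    intro A hA
    rw [Finset.subtype_map]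
    exact Finset.filter_eq_self.2 (hπ₀sub A hA)
  have hcoe : ∀ A ∈ π₀,
      Subtype.val '' ((A.subtype (fun v => v ∈ Fᶜ) : Finset ↥(Fᶜ)) : Set ↥(Fᶜ))
        = (A : Set V) := by
    intro A hA
    rw [← coe_map_subtype, hrec A hA]
  refine ⟨π₀.image (fun A => A.subtype (fun v => v ∈ Fᶜ)), ⟨⟨?_, ?_⟩, ?_⟩, ?_⟩
  · -- nonempty classes
    intro A' hA'
    obtain ⟨A, hA, rfl⟩ := Finset.mem_image.1 hA'
    obtain ⟨a, ha⟩ := h.1.1 A (Finset.mem_sdiff.1 hA).1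
    exact ⟨⟨a, hπ₀sub A hA a ha⟩, Finset.mem_subtype.2 ha⟩
  · -- unique class
    intro x
    obtain ⟨A, ⟨hA, hxA⟩, huniq⟩ := h.1.2 ↑x
    have hA0 : A ∈ π₀ := by
      rw [hπ₀def, Finset.mem_sdiff]
      refine ⟨hA, fun hAFs => ?_⟩
      obtain ⟨v, hv, he⟩ := hmemFs A hAFs
      rw [he, Finset.mem_singleton] at hxA
      exact x.2 (hxA ▸ hv)
    refine ⟨A.subtype _, ⟨Finset.mem_image_of_mem _ hA0, Finset.mem_subtype.2 hxA⟩, ?_⟩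
    rintro B' ⟨hB', hxB'⟩
    obtain ⟨B, hB, rfl⟩ := Finset.mem_image.1 hB'
    have hBA : B = A := huniq B ⟨(Finset.mem_sdiff.1 hB).1, Finset.mem_subtype.1 hxB'⟩
    rw [hBA]
  · -- clauses
    intro A' hA'
    obtain ⟨A, hA0, rfl⟩ := Finset.mem_image.1 hA'
    have hAπ : A ∈ π := (Finset.mem_sdiff.1 hA0).1
    rcases h.2 A hAπ with ⟨v, hAv, hdom⟩ | ⟨hnd, B, hB, hBA, hco⟩
    · exfalso
      have hvF : v ∈ F := mem_F_of_dom hF (hAv ▸ hdom)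
      have hvA : v ∈ A := by
        have : (v : V) ∈ (A : Set V) := by rw [hAv]; exact Set.mem_singleton v
        exact this
      exact (hπ₀sub A hA0 v hvA) hvF
    · right
      have hB0 : B ∈ π₀ := by
        rw [hπ₀def, Finset.mem_sdiff]
        refine ⟨hB, fun hBFs => ?_⟩
        obtain ⟨v, hv, he⟩ := hmemFs B hBFs
        apply hco.2.2.2.2.1
        rw [he, Finset.coe_singleton]
        exact indepDom_singleton (hfull v hv)
      refine ⟨?_, B.subtype _, Finset.mem_image_of_mem _ hB0, ?_, ?_⟩
      · rw [← indepDom_image hfull hne, hcoe A hA0]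
        exact hnd
      · intro e
        exact hBA (by rw [← hrec B hB0, ← hrec A hA0, e])
      · rw [← iccoalition_image hfull hne, hcoe A hA0, hcoe B hB0]
        exact hco
  · -- cardinality
    have hinj : Set.InjOn (fun A => Finset.subtype (fun v => v ∈ Fᶜ) A) π₀ := by
      intro A hA B hB e
      rw [← hrec A hA, ← hrec B hB]
      exact congrArg (Finset.map _) e
    have h1 : Fs.card = F.ncard := by
      rw [hFsdef, Finset.card_image_of_injective _ Finset.singleton_injective,
        Set.ncard_eq_toFinset_card F (Set.toFinite F)]
    have h2 := Finset.card_image_of_injOn hinj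
    have h3 := Finset.card_sdiff_of_subset hFsπ
    have h4 := Finset.card_le_card hFsπ
    rw [h2, ← hπ₀def] at *
    omega

end Helpers

theorem stmt_11 {V : Type*} [Fintype V] (G : SimpleGraph V) (n : ℕ)
    (hn : Fintype.card V = n)
    (F : Set V) (hF : F = {v : V | ∀ w : V, w ≠ v → G.Adj v w})
    (r : ℕ) (hr : r = F.ncard) (hr1 : 1 ≤ r)
    (k : ℕ) (hk1 : r < k) (hk2 : k ≤ n) :
    IC G = k ↔ IC (G.induce Fᶜ) = k - r := by
  classical
  have hne : (Fᶜ : Set V).Nonempty := by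
    rw [Set.nonempty_iff_ne_empty]
    intro h0
    have hFu : F = Set.univ := by rwa [Set.compl_empty_iff] at h0
    rw [hFu, Set.ncard_univ, Nat.card_eq_fintype_card, hn] at hr
    omega
  set S' : Set ℕ :=
    {m | ∃ π' : Finset (Finset ↥(Fᶜ)), IsICPartition (G.induce Fᶜ) π' ∧ π'.card = m}
    with hS'def
  set S : Set ℕ :=
    {m | ∃ π : Finset (Finset V), IsICPartition G π ∧ π.card = m} with hSdef
  have hICG : IC G = sSup S := rfl
  have hICG' : IC (G.induce Fᶜ) = sSup S' := rfl
  have hfwd : ∀ m ∈ S', m + r ∈ S := by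
    intro m hm
    obtain ⟨π', hπ', hc⟩ := hm
    obtain ⟨π, hπ, hcard⟩ := dirA hF hne hπ'
    exact ⟨π, hπ, by rw [hcard, hc, hr]⟩
  have hbwd : ∀ m ∈ S, ∃ m' ∈ S', m = m' + r := by
    intro m hm
    obtain ⟨π, hπ, hc⟩ := hm
    obtain ⟨π', hπ', hcard⟩ := dirB hF hne hπ
    exact ⟨π'.card, ⟨π', hπ', rfl⟩, by rw [← hc, hcard, hr]⟩
  by_cases hE : S'.Nonempty
  · haveI : Fintype ↥(Fᶜ) := Fintype.ofFinite _
    have hbdd : BddAbove S' := by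
      refine ⟨Fintype.card (Finset ↥(Fᶜ)), fun m hm => ?_⟩
      obtain ⟨π', _, hc⟩ := hm
      exact hc ▸ Finset.card_le_univ π'
    have hm0 : sSup S' ∈ S' := Nat.sSup_mem hE hbdd
    have hub : ∀ m ∈ S, m ≤ sSup S' + r := by
      intro m hm
      obtain ⟨m', hm', rfl⟩ := hbwd m hm
      have := le_csSup hbdd hm'
      omega
    have hICGval : IC G = sSup S' + r := by
      rw [hICG]
      refine le_antisymm (csSup_le ⟨_, hfwd _ hm0⟩ hub)
        (le_csSup ⟨sSup S' + r, hub⟩ (hfwd _ hm0))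
    rw [hICGval, hICG']
    omega
  · have hS'e : S' = ∅ := Set.not_nonempty_iff_eq_empty.1 hE
    have hSe : S = ∅ := by
      rw [Set.eq_empty_iff_forall_notMem]
      intro m hm
      obtain ⟨m', hm', _⟩ := hbwd m hm
      exact hE ⟨m', hm'⟩
    rw [hICG, hICG', hS'e, hSe, csSup_empty]
    simp only [Nat.bot_eq_zero]
    omega

end ICNL
end

section
/- Let G be a graph whose set I of isolated vertices is nonempty. If IC(G) ≥ 3, then for every ic-partition π of G with exactly IC(G) classes, some class of π equals I. -/
namespace ICNL

variable {V : Type*}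

theorem stmt_12 {V : Type*} [Fintype V] (G : SimpleGraph V)
    (I : Set V) (hI : I = {v : V | ∀ w : V, ¬ G.Adj v w}) (hne : I.Nonempty)
    (h3 : 3 ≤ IC G)
    (π : Finset (Finset V)) (hπ : IsICPartition G π) (hcard : π.card = IC G) :
    ∃ A ∈ π, (A : Set V) = I := by
  classical
  obtain ⟨hpart, hclass⟩ := hπ
  obtain ⟨hnonempty, huniq⟩ := hpart
  -- uniqueness of classes
  have classEq : ∀ A ∈ π, ∀ B ∈ π, ∀ v : V, v ∈ A → v ∈ B → A = B := by
    intro A hA B hB v hvA hvB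
    obtain ⟨C, _, hCuniq⟩ := huniq v
    rw [hCuniq A ⟨hA, hvA⟩, hCuniq B ⟨hB, hvB⟩]
  -- every dominating set contains I
  have hdomI : ∀ S : Set V, Dominating G S → I ⊆ S := by
    intro S hS z hz
    rcases hS z with h | ⟨u, huS, hadj⟩
    · exact h
    · rw [hI] at hz; exact absurd hadj.symm (hz u)
  have hc3 : 3 ≤ π.card := by omega
  -- no class is a dominating singleton
  have hnosing : ∀ A ∈ π, ¬ (∃ v : V, (A : Set V) = {v} ∧ Dominating G (A : Set V)) := by
    rintro A hA ⟨v, hAv, hdom⟩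
    obtain ⟨w, hw⟩ := hne
    have hwA : w ∈ (A : Set V) := hdomI _ hdom hw
    have hwv : w = v := by rwa [hAv] at hwA
    have hiso : ∀ u : V, ¬ G.Adj v u := by rw [hI] at hw; rwa [hwv] at hw
    have hall : ∀ u : V, u = v := by
      intro u
      rcases hdom u with h | ⟨x, hxA, hadj⟩
      · rwa [hAv] at h
      · rw [hAv] at hxA; exact absurd (hxA ▸ hadj) (hiso u)
    have : π = {A} := by
      apply Finset.eq_singleton_iff_unique_mem.2
      refine ⟨hA, fun B hB => ?_⟩
      obtain ⟨u, hu⟩ := hnonempty B hB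
      have huA : u ∈ A := by
        have : (u : V) ∈ (A : Set V) := by rw [hAv]; exact hall u
        exact_mod_cast this
      exact classEq B hB A hA u hu huA
    rw [this] at hc3; simp at hc3
  -- so every class has a coalition partner
  have hcoal : ∀ A ∈ π, ∃ B ∈ π, B ≠ A ∧ ICCoalition G (A : Set V) (B : Set V) := by
    intro A hA
    rcases hclass A hA with h | ⟨_, h⟩
    · exact absurd h (hnosing A hA)
    · exact h
  -- the class of a fixed isolated vertex w
  obtain ⟨w, hw⟩ := hne
  obtain ⟨A0, ⟨hA0, hwA0⟩, _⟩ := huniq w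
  obtain ⟨B0, hB0, hB0ne, hco0⟩ := hcoal A0 hA0
  have hIAB : I ⊆ (A0 : Set V) ∪ (B0 : Set V) := hdomI _ hco0.2.2.2.2.2.2
  -- pick a third class C
  have : ∃ C ∈ π, C ≠ A0 ∧ C ≠ B0 := by
    by_contra h
    push_neg at h
    have : π ⊆ {A0, B0} := by
      intro C hC
      rcases Classical.em (C = A0) with h1 | h1
      · simp [h1]
      · simp [h C hC h1]
    have := Finset.card_le_card this
    have h2 : ({A0, B0} : Finset (Finset V)).card ≤ 2 := Finset.card_insert_le _ _ |>.trans (by simp)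
    omega
  obtain ⟨C, hC, hCA0, hCB0⟩ := this
  obtain ⟨D, hD, hDne, hcoC⟩ := hcoal C hC
  have hICD : I ⊆ (C : Set V) ∪ (D : Set V) := hdomI _ hcoC.2.2.2.2.2.2
  -- I ∩ C = ∅ hence I ⊆ D, and D = A0
  have hInotC : ∀ z ∈ I, z ∉ (C : Set V) := by
    intro z hz hzC
    rcases hIAB hz with h | h
    · exact hCA0 (classEq C hC A0 hA0 z hzC h)
    · exact hCB0 (classEq C hC B0 hB0 z hzC h)
  have hID : I ⊆ (D : Set V) := by
    intro z hz
    rcases hICD hz with h | h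
    · exact absurd h (hInotC z hz)
    · exact h
  have hDA0 : D = A0 := classEq D hD A0 hA0 w (hID hw) hwA0
  have hIA0 : I ⊆ (A0 : Set V) := hDA0 ▸ hID
  -- A0 is independent
  have hindA0 : IndepSet G (A0 : Set V) := hco0.2.1
  -- A0 ⊆ I
  have hA0I : (A0 : Set V) ⊆ I := by
    intro x hxA0
    by_contra hxI
    rw [hI] at hxI
    simp only [Set.mem_setOf_eq, not_forall, not_not] at hxI
    obtain ⟨y, hxy⟩ := hxI
    have hyA0 : y ∉ (A0 : Set V) := fun hy => hindA0 hxA0 hy hxy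
    obtain ⟨E, ⟨hE, hyE⟩, _⟩ := huniq y
    have hEA0 : E ≠ A0 := fun h => hyA0 (by rw [← h]; exact_mod_cast hyE)
    obtain ⟨F, hF, hFne, hcoE⟩ := hcoal E hE
    have hIEF : I ⊆ (E : Set V) ∪ (F : Set V) := hdomI _ hcoE.2.2.2.2.2.2
    have hwEF := hIEF hw
    have hFA0 : F = A0 := by
      rcases hwEF with h | h
      · exact absurd (classEq E hE A0 hA0 w h hwA0) hEA0
      · exact classEq F hF A0 hA0 w h hwA0
    have hind : IndepSet G ((E : Set V) ∪ (F : Set V)) := hcoE.2.2.2.2.2.1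
    have hxEF : x ∈ ((E : Set V) ∪ (F : Set V)) := Or.inr (hFA0 ▸ hxA0)
    have hyEF : y ∈ ((E : Set V) ∪ (F : Set V)) := Or.inl hyE
    exact hind hxEF hyEF hxy
  exact ⟨A0, hA0, le_antisymm hA0I hIA0⟩


end ICNL
end

section
/- Let G be a graph of order n. Then (1) IC(G) = 1 if and only if G is isomorphic to K_1, and (2) IC(G) = 2 if and only if G is isomorphic to K_2 or G is isomorphic to the edgeless graph on n vertices for some n ≥ 2. -/
namespace ICNL

variable {V : Type*}

section Aux

variable [Fintype V] {G : SimpleGraph V}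

lemma partition_card_le {π : Finset (Finset V)} (h : IsPartition π) :
    π.card ≤ Fintype.card V := by
  classical
  rcases π.eq_empty_or_nonempty with rfl | ⟨A0, hA0⟩
  · simp
  have hV : Nonempty V := ⟨(h.1 A0 hA0).choose⟩
  have key := Finset.card_le_card_of_injOn
    (f := fun A : Finset V => if hA : A.Nonempty then hA.choose else Classical.arbitrary V)
    (s := π) (t := Finset.univ) (fun A _ => Finset.mem_univ _) ?_
  · simpa using key
  · intro A hA B hB hfe
    have hAne := h.1 A hA
    have hBne := h.1 B hB
    simp only [dif_pos hAne, dif_pos hBne] at hfe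
    have h1 : hAne.choose ∈ A := hAne.choose_spec
    have h2 : hAne.choose ∈ B := hfe ▸ hBne.choose_spec
    exact ((h.2 hAne.choose).unique ⟨hA, h1⟩ ⟨hB, h2⟩)

lemma bddAbove_IC_set :
    BddAbove {k | ∃ π : Finset (Finset V), IsICPartition G π ∧ π.card = k} := by
  exact ⟨Fintype.card V, fun k ⟨π, hπ, hc⟩ => hc ▸ partition_card_le hπ.1⟩

lemma exists_of_IC_eq {m : ℕ} (h : IC G = m) (hm : m ≠ 0) :
    ∃ π : Finset (Finset V), IsICPartition G π ∧ π.card = m := by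
  have hne : {k | ∃ π : Finset (Finset V), IsICPartition G π ∧ π.card = k}.Nonempty := by
    by_contra hc
    rw [Set.not_nonempty_iff_eq_empty] at hc
    rw [IC, hc] at h
    simp at h
    exact hm h.symm
  have := Nat.sSup_mem hne bddAbove_IC_set
  rw [IC] at h
  rw [h] at this
  exact this

lemma IC_le {m : ℕ}
    (h : ∀ π : Finset (Finset V), IsICPartition G π → π.card ≤ m) : IC G ≤ m :=
  csSup_le' (fun _ ⟨π, hπ, hc⟩ => hc ▸ h π hπ)

lemma le_IC {π : Finset (Finset V)} (hπ : IsICPartition G π) : π.card ≤ IC G :=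
  le_csSup bddAbove_IC_set ⟨π, hπ, rfl⟩

/-- In an edgeless graph, a dominating set is the whole vertex set. -/
lemma bot_dominating (hG : ∀ u v : V, ¬ G.Adj u v) {S : Set V} :
    Dominating G S ↔ S = Set.univ := by
  constructor
  · intro h
    ext v
    simp only [Set.mem_univ, iff_true]
    rcases h v with hv | ⟨u, _, hadj⟩
    · exact hv
    · exact absurd hadj (hG u v)
  · rintro rfl v
    exact Or.inl (Set.mem_univ v)

lemma bot_indep (hG : ∀ u v : V, ¬ G.Adj u v) (S : Set V) : IndepSet G S :=
  fun u _ v _ => hG u v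

/-- Every ic-partition of an edgeless graph on `≥ 2` vertices has at most two classes. -/
lemma bot_card_le_two (hG : ∀ u v : V, ¬ G.Adj u v) (h2 : 2 ≤ Fintype.card V)
    {π : Finset (Finset V)} (hπ : IsICPartition G π) : π.card ≤ 2 := by
  classical
  rcases π.eq_empty_or_nonempty with rfl | ⟨A, hA⟩
  · simp
  rcases hπ.2 A hA with ⟨v, hv, hdom⟩ | ⟨_, B, hB, _, hco⟩
  · exfalso
    obtain ⟨u, hu⟩ := Fintype.exists_ne_of_one_lt_card h2 v
    rcases hdom u with hmem | ⟨w, _, hadj⟩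
    · rw [hv] at hmem
      exact hu hmem
    · exact hG _ _ hadj
  · have hcover : ∀ v : V, v ∈ A ∨ v ∈ B := by
      intro v
      rcases hco.2.2.2.2.2.2 v with h | ⟨u, _, hadj⟩
      · simpa using h
      · exact absurd hadj (hG u v)
    have hsub : π ⊆ {A, B} := by
      intro C hC
      obtain ⟨c, hc⟩ := hπ.1.1 C hC
      rcases hcover c with h | h
      · simp [(hπ.1.2 c).unique ⟨hC, hc⟩ ⟨hA, h⟩]
      · simp [(hπ.1.2 c).unique ⟨hC, hc⟩ ⟨hB, h⟩]
    calc π.card ≤ ({A, B} : Finset (Finset V)).card := Finset.card_le_card hsub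
      _ ≤ 2 := (Finset.card_insert_le _ _).trans (by simp)

/-- An edgeless graph on `≥ 2` vertices has an ic-partition with two classes. -/
lemma bot_exists_two (hG : ∀ u v : V, ¬ G.Adj u v) (h2 : 2 ≤ Fintype.card V) :
    ∃ π : Finset (Finset V), IsICPartition G π ∧ π.card = 2 := by
  classical
  have hV : Nonempty V := Fintype.card_pos_iff.mp (by omega)
  obtain ⟨a⟩ := hV
  obtain ⟨b, hb⟩ := Fintype.exists_ne_of_one_lt_card h2 a
  set A : Finset V := {a} with hAdef
  set B : Finset V := Finset.univ \ {a} with hBdef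
  have hAB : A ≠ B := by
    intro h
    have : a ∈ B := h ▸ Finset.mem_singleton_self a
    simp [hBdef] at this
  have hmemA : ∀ v : V, v = a → v ∈ A := by intro v hv; simp [hAdef, hv]
  have hmemB : ∀ v : V, v ≠ a → v ∈ B := by intro v hv; simp [hBdef, hv]
  have huniv : (A : Set V) ∪ (B : Set V) = Set.univ := by
    ext v
    by_cases hv : v = a <;> simp [hAdef, hBdef, hv]
  have hAne : ¬ IndepDom G (A : Set V) := by
    rintro ⟨_, hdom⟩
    rw [bot_dominating hG] at hdom
    have : b ∈ (A : Set V) := hdom ▸ Set.mem_univ b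
    simp [hAdef] at this
    exact hb this
  have hBne : ¬ IndepDom G (B : Set V) := by
    rintro ⟨_, hdom⟩
    rw [bot_dominating hG] at hdom
    have : a ∈ (B : Set V) := hdom ▸ Set.mem_univ a
    simp [hBdef] at this
  have hdisj : Disjoint (A : Set V) (B : Set V) := by
    rw [Set.disjoint_left]
    intro v hvA hvB
    simp [hAdef] at hvA
    simp [hBdef, hvA] at hvB
  have hunion : IndepDom G ((A : Set V) ∪ (B : Set V)) := by
    refine ⟨bot_indep hG _, ?_⟩
    rw [bot_dominating hG]
    exact huniv
  have hunion' : IndepDom G ((B : Set V) ∪ (A : Set V)) := by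
    rwa [Set.union_comm]
  refine ⟨{A, B}, ⟨⟨?_, ?_⟩, ?_⟩, ?_⟩
  · intro C hC
    rcases Finset.mem_insert.mp hC with rfl | hC
    · exact ⟨a, by simp [hAdef]⟩
    · rw [Finset.mem_singleton] at hC
      exact ⟨b, hC ▸ hmemB b hb⟩
  · intro v
    by_cases hv : v = a
    · refine ⟨A, ⟨by simp, hmemA v hv⟩, ?_⟩
      rintro C ⟨hC, hvC⟩
      rcases Finset.mem_insert.mp hC with rfl | hC
      · rfl
      · rw [Finset.mem_singleton] at hC
        subst hC
        simp [hBdef] at hvC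
        exact absurd hv hvC.elim
    · refine ⟨B, ⟨by simp, hmemB v hv⟩, ?_⟩
      rintro C ⟨hC, hvC⟩
      rcases Finset.mem_insert.mp hC with rfl | hC
      · simp [hAdef] at hvC
        exact absurd hvC hv
      · rw [Finset.mem_singleton] at hC
        exact hC
  · intro C hC
    rcases Finset.mem_insert.mp hC with rfl | hC
    · exact Or.inr ⟨hAne, B, by simp, hAB.symm,
        ⟨hdisj, bot_indep hG _, bot_indep hG _, hAne, hBne, hunion⟩⟩
    · rw [Finset.mem_singleton] at hC
      subst hC
      exact Or.inr ⟨hBne, A, by simp, hAB,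
        ⟨hdisj.symm, bot_indep hG _, bot_indep hG _, hBne, hAne, hunion'⟩⟩
  · rw [Finset.card_insert_of_notMem (by simpa using hAB), Finset.card_singleton]

end Aux

theorem stmt_13 {V : Type*} [Fintype V] (G : SimpleGraph V) (n : ℕ)
    (hn : Fintype.card V = n) :
    (IC G = 1 ↔ Nonempty (G ≃g (⊤ : SimpleGraph (Fin 1)))) ∧
    (IC G = 2 ↔ (Nonempty (G ≃g (⊤ : SimpleGraph (Fin 2))) ∨
      (2 ≤ n ∧ Nonempty (G ≃g (⊥ : SimpleGraph (Fin n)))))) := by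
  classical
  subst hn
  constructor
  · -- Part 1
    constructor
    · intro h1
      obtain ⟨π, hπ, hc⟩ := exists_of_IC_eq h1 one_ne_zero
      obtain ⟨A, rfl⟩ := Finset.card_eq_one.mp hc
      have hA : A ∈ ({A} : Finset (Finset V)) := Finset.mem_singleton_self A
      rcases hπ.2 A hA with ⟨v, hv, _⟩ | ⟨_, B, hB, hBA, _⟩
      · -- A = {v}; every vertex is in A
        have hall : ∀ u : V, u = v := by
          intro u
          obtain ⟨C, ⟨hC, huC⟩, _⟩ := hπ.1.2 u
          rw [Finset.mem_singleton] at hC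
          subst hC
          have : u ∈ (C : Set V) := huC
          rw [hv] at this
          exact this
        have hcard : Fintype.card V = 1 := Fintype.card_eq_one_iff.mpr ⟨v, hall⟩
        have e := Fintype.equivFinOfCardEq hcard
        refine ⟨⟨e, ?_⟩⟩
        intro a b
        have hab : a = b := (hall a).trans (hall b).symm
        subst hab
        simp [SimpleGraph.irrefl]
      · rw [Finset.mem_singleton] at hB
        exact absurd hB hBA
    · rintro ⟨e⟩
      have hcard : Fintype.card V = 1 := by
        rw [Fintype.card_congr e.toEquiv]
        simp
      obtain ⟨v, hv⟩ := Fintype.card_eq_one_iff.mp hcard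
      have hmem : (1 : ℕ) ∈ {k | ∃ π : Finset (Finset V), IsICPartition G π ∧ π.card = k} := by
        refine ⟨{({v} : Finset V)}, ⟨⟨?_, ?_⟩, ?_⟩, by simp⟩
        · intro C hC
          rw [Finset.mem_singleton] at hC
          exact ⟨v, hC ▸ Finset.mem_singleton_self v⟩
        · intro u
          refine ⟨{v}, ⟨Finset.mem_singleton_self _, by simp [hv u]⟩, ?_⟩
          rintro C ⟨hC, _⟩
          rwa [Finset.mem_singleton] at hC
        · intro C hC
          rw [Finset.mem_singleton] at hC
          subst hC
          exact Or.inl ⟨v, by simp, fun u => Or.inl (by simp [hv u])⟩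
      refine le_antisymm ?_ (le_csSup bddAbove_IC_set hmem)
      exact IC_le (fun π hπ => (partition_card_le hπ.1).trans hcard.le)
  · -- Part 2
    constructor
    · intro h2
      obtain ⟨π, hπ, hc⟩ := exists_of_IC_eq h2 two_ne_zero
      obtain ⟨A, B, hABne, rfl⟩ := Finset.card_eq_two.mp hc
      have hA : A ∈ ({A, B} : Finset (Finset V)) := by simp
      have hB : B ∈ ({A, B} : Finset (Finset V)) := by simp
      have hcover : ∀ v : V, v ∈ A ∨ v ∈ B := by
        intro v
        obtain ⟨C, ⟨hC, hvC⟩, _⟩ := hπ.1.2 v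
        rcases Finset.mem_insert.mp hC with rfl | hC
        · exact Or.inl hvC
        · rw [Finset.mem_singleton] at hC
          exact Or.inr (hC ▸ hvC)
      -- helper: if some class has the coalition condition, G is edgeless on ≥ 2 vertices
      have botcase : ∀ C D : Finset V, C ∈ ({A, B} : Finset (Finset V)) →
          D ∈ ({A, B} : Finset (Finset V)) → D ≠ C →
          ICCoalition G (C : Set V) (D : Set V) →
          2 ≤ Fintype.card V ∧ Nonempty (G ≃g (⊥ : SimpleGraph (Fin (Fintype.card V)))) := by
        intro C D hC hD hDC hco
        have hCD : (C : Set V) ∪ (D : Set V) = Set.univ := by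
          ext v
          simp only [Set.mem_univ, iff_true, Set.mem_union, Finset.mem_coe]
          have : C = A ∧ D = B ∨ C = B ∧ D = A := by
            rcases Finset.mem_insert.mp hC with rfl | hC'
            · rcases Finset.mem_insert.mp hD with rfl | hD'
              · exact absurd rfl hDC
              · rw [Finset.mem_singleton] at hD'
                exact Or.inl ⟨rfl, hD'⟩
            · rw [Finset.mem_singleton] at hC'
              rcases Finset.mem_insert.mp hD with rfl | hD'
              · exact Or.inr ⟨hC', rfl⟩
              · rw [Finset.mem_singleton] at hD'
                exact absurd (hC'.trans hD'.symm) (fun h => hDC h.symm)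
          rcases this with ⟨rfl, rfl⟩ | ⟨rfl, rfl⟩
          · exact hcover v
          · exact (hcover v).symm
        have hG : ∀ u v : V, ¬ G.Adj u v := by
          intro u v hadj
          have hindep := hco.2.2.2.2.2.1
          have hu : u ∈ (C : Set V) ∪ (D : Set V) := hCD ▸ Set.mem_univ u
          have hv : v ∈ (C : Set V) ∪ (D : Set V) := hCD ▸ Set.mem_univ v
          exact hindep hu hv hadj
        have h2card : 2 ≤ Fintype.card V := by
          obtain ⟨c, hc'⟩ := hπ.1.1 C hC
          obtain ⟨d, hd'⟩ := hπ.1.1 D hD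
          have hne : c ≠ d := by
            intro h
            subst h
            exact hDC ((hπ.1.2 c).unique ⟨hD, hd'⟩ ⟨hC, hc'⟩)
          have : Nontrivial V := ⟨c, d, hne⟩
          exact Fintype.one_lt_card
        exact ⟨h2card, ⟨⟨Equiv.refl V |>.trans (Fintype.equivFinOfCardEq rfl), by
          intro a b
          simp only [SimpleGraph.bot_adj]
          constructor
          · exact fun h => absurd h (by simp)
          · exact fun h => absurd h (hG a b)⟩⟩⟩
      rcases hπ.2 A hA with ⟨a, ha, hadoma⟩ | ⟨_, D, hD, hDA, hco⟩
      · rcases hπ.2 B hB with ⟨b, hb, hdomb⟩ | ⟨_, D, hD, hDB, hco⟩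
        · -- both singletons dominating: K₂
          left
          have hab : a ≠ b := by
            intro h
            apply hABne
            have : (A : Set V) = (B : Set V) := by rw [ha, hb, h]
            exact_mod_cast Finset.coe_injective this
          have hadj : G.Adj a b := by
            rcases hadoma b with hmem | ⟨u, hu, hadj⟩
            · rw [ha] at hmem
              exact absurd hmem.symm hab
            · rw [ha] at hu
              rwa [hu] at hadj
          have hall : ∀ v : V, v = a ∨ v = b := by
            intro v
            rcases hcover v with h | h
            · left; have : v ∈ (A : Set V) := h; rwa [ha] at this
            · right; have : v ∈ (B : Set V) := h; rwa [hb] at this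
          have hadj_iff : ∀ v w : V, G.Adj v w ↔ v ≠ w := by
            intro v w
            constructor
            · exact fun h => h.ne
            · intro hvw
              rcases hall v with rfl | rfl <;> rcases hall w with rfl | rfl
              · exact absurd rfl hvw
              · exact hadj
              · exact hadj.symm
              · exact absurd rfl hvw
          have hcard : Fintype.card V = 2 := by
            rw [Fintype.card, Finset.card_eq_two]
            exact ⟨a, b, hab, by ext v; simpa using hall v⟩
          have e := Fintype.equivFinOfCardEq hcard
          refine ⟨⟨e, ?_⟩⟩
          intro x y
          rw [SimpleGraph.top_adj, hadj_iff x y]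
          constructor
          · exact fun h hxy => h (hxy ▸ rfl)
          · exact fun h hxy => h (e.injective hxy)
        · -- B has coalition with D; D must be A, contradiction with A dominating singleton
          have hDA' : D = A := by
            rcases Finset.mem_insert.mp hD with rfl | hD'
            · rfl
            · rw [Finset.mem_singleton] at hD'
              exact absurd hD' hDB
          subst hDA'
          exfalso
          apply hco.2.2.2.2.1
          refine ⟨?_, hadoma⟩
          intro u hu v hv hadj
          rw [ha] at hu hv
          rw [hu, hv] at hadj
          exact G.irrefl hadj
      · -- A has the coalition condition: edgeless
        right
        exact botcase A D hA hD hDA hco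
    · intro h
      obtain h | ⟨h2, h⟩ := h
      all_goals obtain ⟨e⟩ := h
      · -- K₂ case
        have hcard : Fintype.card V = 2 := by
          rw [Fintype.card_congr e.toEquiv]; simp
        have hadj_iff : ∀ v w : V, G.Adj v w ↔ v ≠ w := by
          intro v w
          rw [← e.map_rel_iff]
          simp only [SimpleGraph.top_adj]
          constructor
          · exact fun h hvw => h (hvw ▸ rfl)
          · exact fun h hvw => h (e.toEquiv.injective hvw)
        obtain ⟨a, b, hab, hall⟩ : ∃ a b : V, a ≠ b ∧ ∀ v, v = a ∨ v = b := by
          rw [Fintype.card, Finset.card_eq_two] at hcard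
          obtain ⟨a, b, hab, h⟩ := hcard
          exact ⟨a, b, hab, fun v => by
            have := Finset.mem_univ v; rw [h] at this; simpa using this⟩
        have hmem : (2 : ℕ) ∈ {k | ∃ π : Finset (Finset V), IsICPartition G π ∧ π.card = k} := by
          have hABne : ({a} : Finset V) ≠ {b} := by
            simp only [ne_eq, Finset.singleton_inj]
            exact hab
          refine ⟨{({a} : Finset V), ({b} : Finset V)}, ⟨⟨?_, ?_⟩, ?_⟩, ?_⟩
          · intro C hC
            rcases Finset.mem_insert.mp hC with rfl | hC
            · exact ⟨a, Finset.mem_singleton_self a⟩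
            · rw [Finset.mem_singleton] at hC
              exact ⟨b, hC ▸ Finset.mem_singleton_self b⟩
          · intro v
            rcases hall v with rfl | rfl
            · refine ⟨{v}, ⟨by simp, Finset.mem_singleton_self v⟩, ?_⟩
              rintro C ⟨hC, hvC⟩
              rcases Finset.mem_insert.mp hC with rfl | hC
              · rfl
              · rw [Finset.mem_singleton] at hC
                subst hC
                rw [Finset.mem_singleton] at hvC
                exact absurd hvC hab
            · refine ⟨{v}, ⟨by simp, Finset.mem_singleton_self v⟩, ?_⟩
              rintro C ⟨hC, hvC⟩
              rcases Finset.mem_insert.mp hC with rfl | hC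
              · rw [Finset.mem_singleton] at hvC
                exact absurd hvC.symm hab
              · rw [Finset.mem_singleton] at hC
                exact hC
          · intro C hC
            have hdoma : Dominating G ({a} : Set V) := by
              intro v
              rcases hall v with rfl | rfl
              · exact Or.inl rfl
              · exact Or.inr ⟨a, rfl, (hadj_iff a v).mpr hab⟩
            have hdomb : Dominating G ({b} : Set V) := by
              intro v
              rcases hall v with rfl | rfl
              · exact Or.inr ⟨b, rfl, (hadj_iff b v).mpr hab.symm⟩
              · exact Or.inl rfl
            rcases Finset.mem_insert.mp hC with rfl | hC
            · exact Or.inl ⟨a, by simp, by simpa using hdoma⟩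
            · rw [Finset.mem_singleton] at hC
              subst hC
              exact Or.inl ⟨b, by simp, by simpa using hdomb⟩
          · rw [Finset.card_insert_of_notMem (by simpa using hABne), Finset.card_singleton]
        refine le_antisymm ?_ (le_csSup bddAbove_IC_set hmem)
        exact IC_le (fun π hπ => (partition_card_le hπ.1).trans hcard.le)
      · -- edgeless case
        have hG : ∀ u v : V, ¬ G.Adj u v := by
          intro u v hadj
          have := e.map_rel_iff.mpr hadj
          simp at this
        obtain ⟨π, hπ, hc⟩ := bot_exists_two hG h2
        refine le_antisymm (IC_le (fun π' hπ' => bot_card_le_two hG h2 hπ')) ?_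
        rw [← hc]
        exact le_IC hπ

end ICNL
end
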